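/- Let 0<q<1 and let s, t ≥ 2 be integers. Then ζ[s] ζ[t] = ζ[s+t] + (1−q) ζ[s+t−1] + ζ[s,t] + ζ[t,s]. -/

import Mathlib

/-- The `q`-analog of a natural number: `[k]_q = (1-q^k)/(1-q)`. -/
noncomputable def qnum (q : ℝ) (k : ℕ) : ℝ := (1 - q ^ k) / (1 - q)

/-- The single `q`-zeta value `ζ[n] = Σ_{k≥1} q^{(n-1)k}/[k]_q^n`. -/
noncomputable def qzeta (q : ℝ) (n : ℕ) : ℝ :=
  ∑' k : ℕ, q ^ ((n - 1) * (k + 1)) / (qnum q (k + 1)) ^ n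

/-- The double `q`-zeta value
`ζ[a,b] = Σ_{k₁>k₂>0} (q^{(a-1)k₁}/[k₁]_q^a)(q^{(b-1)k₂}/[k₂]_q^b)`. -/
noncomputable def qzeta2 (q : ℝ) (a b : ℕ) : ℝ :=
  ∑' p : {p : ℕ × ℕ // p.2 < p.1 ∧ 0 < p.2},
    (q ^ ((a - 1) * p.1.1) / (qnum q p.1.1) ^ a) *
      (q ^ ((b - 1) * p.1.2) / (qnum q p.1.2) ^ b)

/-! Multiply the two series and split the double sum over `(k₁, k₂)` into the diagonal and the
two halves `k₁ > k₂`, `k₁ < k₂`, which are `ζ[s,t]` and `ζ[t,s]`. On the diagonal,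
`q ^ k + (1 - q) [k]_q = 1` turns each product of terms into the `k`-th terms of
`ζ[s+t] + (1 - q) ζ[s+t-1]`. -/

theorem tsum_prod_eq_tsum_diag_add_tsum_lt_add_tsum_gt {R : Type*} [NormedAddCommGroup R]
    [CompleteSpace R] {F : ℕ × ℕ → R} (hF : Summable F) :
    ∑' p, F p = ∑' k, F (k, k) + ∑' p : {p : ℕ × ℕ // p.2 < p.1}, F p.1
      + ∑' p : {p : ℕ × ℕ // p.2 < p.1}, F p.1.swap := by
  set D := {p : ℕ × ℕ | p.1 = p.2}
  set U := {p : ℕ × ℕ | p.2 < p.1}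
  set L := {p : ℕ × ℕ | p.1 < p.2}
  have hsplit (p : ℕ × ℕ) : F p = D.indicator F p + U.indicator F p + L.indicator F p := by
    simp only [Set.indicator_apply, Set.mem_ofPred_eq, D, U, L]
    rcases lt_trichotomy p.1 p.2 with h | h | h <;> split_ifs <;> first | omega | simp
  have hD : ∑' p, D.indicator F p = ∑' k, F (k, k) := by
    rw [← Function.Injective.tsum_eq (g := fun k : ℕ ↦ (k, k))
      (fun _ _ h ↦ congrArg Prod.fst h)
      ((Set.support_indicator_subset (s := D)).trans fun p hp ↦ ⟨p.1, Prod.ext rfl hp⟩)]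
    exact tsum_congr fun k ↦ Set.indicator_of_mem (s := D) rfl F
  have hL : ∑' p, L.indicator F p = ∑' p : {p : ℕ × ℕ // p.2 < p.1}, F p.1.swap := by
    rw [← Function.Injective.tsum_eq (g := fun p : {p : ℕ × ℕ // p.2 < p.1} ↦ p.1.swap)
      (Prod.swap_injective.comp Subtype.val_injective)
      ((Set.support_indicator_subset (s := L)).trans
        fun p hp ↦ ⟨⟨p.swap, hp⟩, p.swap_swap⟩)]
    exact tsum_congr fun p ↦ Set.indicator_of_mem (s := L) p.2 F
  rw [tsum_congr hsplit, ((hF.indicator D).add (hF.indicator U)).tsum_add (hF.indicator L),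
    (hF.indicator D).tsum_add (hF.indicator U), hD, hL, ← tsum_subtype U F]
  rfl

theorem tsum_mul_tsum_eq_tsum_mul_add_tsum_lt_add_tsum_gt {R : Type*} [NormedCommRing R]
    [CompleteSpace R] {f g : ℕ → R} (hf : Summable fun k ↦ ‖f k‖)
    (hg : Summable fun k ↦ ‖g k‖) :
    (∑' k, f k) * (∑' k, g k) = ∑' k, f k * g k
      + ∑' p : {p : ℕ × ℕ // p.2 < p.1}, f p.1.1 * g p.1.2
      + ∑' p : {p : ℕ × ℕ // p.2 < p.1}, g p.1.1 * f p.1.2 := by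
  rw [tsum_mul_tsum_of_summable_norm hf hg, tsum_prod_eq_tsum_diag_add_tsum_lt_add_tsum_gt
    (F := fun p ↦ f p.1 * g p.2) (summable_mul_of_summable_norm hf hg)]
  exact congrArg _ (tsum_congr fun _ ↦ mul_comm _ _)

theorem tsum_lt_succ_eq_tsum_lt_pos {M : Type*} [AddCommMonoid M] [TopologicalSpace M]
    (h : ℕ → ℕ → M) :
    ∑' p : {p : ℕ × ℕ // p.2 < p.1}, h (p.1.1 + 1) (p.1.2 + 1)
      = ∑' p : {p : ℕ × ℕ // p.2 < p.1 ∧ 0 < p.2}, h p.1.1 p.1.2 := by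
  refine Function.Injective.tsum_eq
    (f := fun p : {p : ℕ × ℕ // p.2 < p.1 ∧ 0 < p.2} ↦ h p.1.1 p.1.2)
    (g := fun p : {p : ℕ × ℕ // p.2 < p.1} ↦ ⟨(p.1.1 + 1, p.1.2 + 1), by grind⟩)
    (fun a b hab ↦ ?_) fun p _ ↦ ⟨⟨(p.1.1 - 1, p.1.2 - 1), by grind⟩, by grind⟩
  simp only [Subtype.mk.injEq, Prod.mk.injEq, Nat.add_right_cancel_iff] at hab
  exact Subtype.ext (Prod.ext hab.1 hab.2)

noncomputable def qzetaTerm (q : ℝ) (n k : ℕ) : ℝ := q ^ ((n - 1) * k) / qnum q k ^ n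

theorem qzeta_eq_tsum_qzetaTerm (q : ℝ) (n : ℕ) :
    qzeta q n = ∑' k, qzetaTerm q n (k + 1) := rfl

theorem qzeta2_eq_tsum_qzetaTerm (q : ℝ) (a b : ℕ) :
    qzeta2 q a b = ∑' p : {p : ℕ × ℕ // p.2 < p.1 ∧ 0 < p.2},
      qzetaTerm q a p.1.1 * qzetaTerm q b p.1.2 := rfl

theorem qzetaTerm_mul_qzetaTerm (q : ℝ) {s t : ℕ} (hs : 1 ≤ s) (ht : 1 ≤ t) (k : ℕ) :
    qzetaTerm q s k * qzetaTerm q t k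
      = qzetaTerm q (s + t) k + (1 - q) * qzetaTerm q (s + t - 1) k := by
  obtain ⟨a, rfl⟩ := Nat.exists_eq_add_of_le' hs
  obtain ⟨b, rfl⟩ := Nat.exists_eq_add_of_le' ht
  simp only [qzetaTerm, show a + 1 + (b + 1) - 1 = a + b + 1 by omega, Nat.add_sub_cancel]
  -- covers `k = 0`, and also `q = 1`, where `qnum` takes the junk value `0`
  by_cases hN : qnum q k = 0
  · simp [hN]
  have hq : 1 - q ≠ 0 := fun h ↦ hN (by simp [qnum, h])
  have hqk : q ^ k = 1 - (1 - q) * qnum q k := by unfold qnum; field_simp; ring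
  simp only [pow_mul', hqk]
  field_simp
  ring

theorem qnum_nonneg {q : ℝ} (hq0 : 0 ≤ q) (hq1 : q < 1) (k : ℕ) : 0 ≤ qnum q k :=
  div_nonneg (sub_nonneg.2 (pow_le_one₀ hq0 hq1.le)) (sub_nonneg.2 hq1.le)

theorem one_le_qnum {q : ℝ} (hq0 : 0 ≤ q) (hq1 : q < 1) {k : ℕ} (hk : k ≠ 0) :
    1 ≤ qnum q k := by
  rw [qnum, le_div_iff₀ (sub_pos.2 hq1), one_mul]
  linarith [pow_le_of_le_one hq0 hq1.le hk]

theorem summable_qzetaTerm {q : ℝ} (hq0 : 0 ≤ q) (hq1 : q < 1) {n : ℕ} (hn : 2 ≤ n) :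
    Summable fun k ↦ qzetaTerm q n (k + 1) := by
  refine (summable_geometric_of_lt_one hq0 hq1).of_nonneg_of_le
    (fun k ↦ div_nonneg (pow_nonneg hq0 _) (pow_nonneg (qnum_nonneg hq0 hq1 _) _)) fun k ↦ ?_
  calc qzetaTerm q n (k + 1) ≤ q ^ ((n - 1) * (k + 1)) :=
        div_le_self (pow_nonneg hq0 _) (one_le_pow₀ (one_le_qnum hq0 hq1 k.succ_ne_zero))
    _ ≤ q ^ k := pow_le_pow_of_le_one hq0 hq1.le
      ((Nat.le_succ k).trans (Nat.le_mul_of_pos_left _ (by omega)))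

/-- The q-stuffle product of two single q-zeta values. -/
theorem q_stuffle (q : ℝ) (hq0 : 0 < q) (hq1 : q < 1) (s t : ℕ) (hs : 2 ≤ s) (ht : 2 ≤ t) :
    qzeta q s * qzeta q t
      = qzeta q (s + t) + (1 - q) * qzeta q (s + t - 1) + qzeta2 q s t + qzeta2 q t s := by
  have hsum {n : ℕ} (hn : 2 ≤ n) : Summable fun k ↦ qzetaTerm q n (k + 1) :=
    summable_qzetaTerm hq0.le hq1 hn
  have hdiag : ∑' k, qzetaTerm q s (k + 1) * qzetaTerm q t (k + 1)
      = qzeta q (s + t) + (1 - q) * qzeta q (s + t - 1) := by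
    rw [tsum_congr fun k ↦ qzetaTerm_mul_qzetaTerm q (by omega) (by omega) (k + 1),
      (hsum (by omega)).tsum_add ((hsum (by omega)).mul_left _), tsum_mul_left,
      qzeta_eq_tsum_qzetaTerm, qzeta_eq_tsum_qzetaTerm]
  rw [qzeta_eq_tsum_qzetaTerm q s, qzeta_eq_tsum_qzetaTerm q t,
    tsum_mul_tsum_eq_tsum_mul_add_tsum_lt_add_tsum_gt (hsum hs).norm (hsum ht).norm, hdiag,
    tsum_lt_succ_eq_tsum_lt_pos (fun a b ↦ qzetaTerm q s a * qzetaTerm q t b),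
    tsum_lt_succ_eq_tsum_lt_pos (fun a b ↦ qzetaTerm q t a * qzetaTerm q s b),
    qzeta2_eq_tsum_qzetaTerm, qzeta2_eq_tsum_qzetaTerm]
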